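/- Let U₁ and U₂ be independent random variables with values in a measurable space Λ, let A, B, B̃ ⊆ Λ be measurable sets, let h : Λ × Λ → [0,∞) be measurable, and set Δ = inf over (x, y, ỹ) ∈ A × B × B̃ of |h(x,y) − h(x,ỹ)|. If U₁ ∈ A almost surely, then the conditional variance satisfies Var[h(U₁,U₂) | σ(U₁)] ≥ (Δ²/4)·(P(U₂ ∈ B) ∧ P(U₂ ∈ B̃)). -/

import Mathlib

/-!
Given `U₁ = x`, independence makes `h(x, U₂)` a random variable with the law of `U₂`, so the
conditional variance is the variance of the section `y ↦ h(x, y)` under that law. By the triangle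
inequality, any centre `c` is at distance at least `Δ/2` from `h(x, ·)` either on all of `B` or on
all of `B̃`, and Chebyshev's inequality turns this into the lower bound.
-/

open MeasureTheory ProbabilityTheory

lemma subset_or_subset_setOf_half_le_abs_sub {α : Type*} {f : α → ℝ} {B B' : Set α} {Δ : ℝ}
    (hsep : ∀ y ∈ B, ∀ y' ∈ B', Δ ≤ |f y - f y'|) (c : ℝ) :
    B ⊆ {y | Δ / 2 ≤ |f y - c|} ∨ B' ⊆ {y | Δ / 2 ≤ |f y - c|} := by
  by_contra! hcon
  simp only [Set.not_subset, Set.mem_ofPred_eq, not_le] at hcon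
  obtain ⟨⟨y, hy, hyc⟩, ⟨y', hy', hy'c⟩⟩ := hcon
  have htri := abs_sub_le (f y) c (f y')
  rw [abs_sub_comm c] at htri
  linarith [hsep y hy y' hy']

lemma mul_min_measureReal_le_variance {α : Type*} [MeasurableSpace α] {ν : Measure α}
    [IsFiniteMeasure ν] {f : α → ℝ} (hf : MemLp f 2 ν) {B B' : Set α} {Δ : ℝ} (hΔ : 0 ≤ Δ)
    (hsep : ∀ y ∈ B, ∀ y' ∈ B', Δ ≤ |f y - f y'|) :
    Δ ^ 2 / 4 * min (ν.real B) (ν.real B') ≤ Var[f; ν] := by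
  rcases hΔ.eq_or_lt with rfl | hΔpos
  · simp [variance_nonneg f ν]
  set C := {y | Δ / 2 ≤ |f y - ν[f]|}
  have hchebyshev : ν.real C ≤ Var[f; ν] / (Δ / 2) ^ 2 :=
    ENNReal.toReal_le_of_le_ofReal (by positivity [variance_nonneg f ν])
      (meas_ge_le_variance_div_sq hf (by positivity))
  have hmin : min (ν.real B) (ν.real B') ≤ ν.real C := by
    rcases subset_or_subset_setOf_half_le_abs_sub hsep ν[f] with hB | hB'
    · exact (min_le_left _ _).trans (measureReal_mono hB)
    · exact (min_le_right _ _).trans (measureReal_mono hB')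
  calc Δ ^ 2 / 4 * min (ν.real B) (ν.real B') ≤ Δ ^ 2 / 4 * ν.real C := by gcongr
    _ = (Δ / 2) ^ 2 * ν.real C := by ring
    _ ≤ Var[f; ν] := by
        rwa [le_div_iff₀ (by positivity), mul_comm] at hchebyshev

section Independent

variable {Ω Λ : Type*} [MeasurableSpace Ω] [MeasurableSpace Λ] {μ : Measure Ω}
  {U₁ U₂ : Ω → Λ} {ψ : Λ × Λ → ℝ}

theorem condExp_comap_ae_eq_integral_map_of_indepFun [IsFiniteMeasure μ]
    (hU₁ : Measurable U₁) (hU₂ : Measurable U₂) (hindep : IndepFun U₁ U₂ μ)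
    (hψ : StronglyMeasurable ψ) (hint : Integrable (fun ω => ψ (U₁ ω, U₂ ω)) μ) :
    μ[fun ω => ψ (U₁ ω, U₂ ω) | MeasurableSpace.comap U₁ inferInstance]
      =ᵐ[μ] fun ω => ∫ y, ψ (U₁ ω, y) ∂(μ.map U₂) := by
  have hprod := (indepFun_iff_map_prod_eq_prod_map_map hU₁.aemeasurable
    hU₂.aemeasurable).mp hindep
  have hpair : Measurable fun ω => (U₁ ω, U₂ ω) := hU₁.prodMk hU₂
  have hψint : Integrable ψ ((μ.map U₁).prod (μ.map U₂)) := by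
    rw [← hprod]
    exact (integrable_map_measure hψ.aestronglyMeasurable hpair.aemeasurable).mpr hint
  set g : Λ → ℝ := fun x => ∫ y, ψ (x, y) ∂(μ.map U₂)
  have hg : StronglyMeasurable g := hψ.integral_prod_right'
  have hgint : Integrable (fun ω => g (U₁ ω)) μ :=
    (integrable_map_measure hg.aestronglyMeasurable hU₁.aemeasurable).mp
      hψint.integral_prod_left
  refine (ae_eq_condExp_of_forall_setIntegral_eq hU₁.comap_le hint
    (fun s _ _ => hgint.integrableOn) ?_
    (hg.comp_measurable (Measurable.of_comap_le le_rfl)).aestronglyMeasurable).symm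
  rintro - ⟨t, ht, rfl⟩ -
  have hpre : (fun ω => (U₁ ω, U₂ ω)) ⁻¹' (t ×ˢ Set.univ) = U₁ ⁻¹' t := by ext; simp
  calc ∫ ω in U₁ ⁻¹' t, g (U₁ ω) ∂μ = ∫ x in t, g x ∂(μ.map U₁) :=
        (setIntegral_map ht hg.aestronglyMeasurable hU₁.aemeasurable).symm
    _ = ∫ p in t ×ˢ Set.univ, ψ p ∂((μ.map U₁).prod (μ.map U₂)) := by
        rw [setIntegral_prod ψ hψint.integrableOn]; simp [g]
    _ = ∫ ω in U₁ ⁻¹' t, ψ (U₁ ω, U₂ ω) ∂μ := by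
        rw [← hprod, ← hpre, setIntegral_map (ht.prod MeasurableSet.univ)
          hψ.aestronglyMeasurable hpair.aemeasurable]

theorem ae_memLp_two_comp_prodMk_left_of_indepFun [IsFiniteMeasure μ]
    (hU₁ : Measurable U₁) (hU₂ : Measurable U₂) (hindep : IndepFun U₁ U₂ μ)
    (hψ : StronglyMeasurable ψ) (hint : Integrable (fun ω => ψ (U₁ ω, U₂ ω) ^ 2) μ) :
    ∀ᵐ ω ∂μ, MemLp (fun y => ψ (U₁ ω, y)) 2 (μ.map U₂) := by
  have hprod := (indepFun_iff_map_prod_eq_prod_map_map hU₁.aemeasurable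
    hU₂.aemeasurable).mp hindep
  have hsq : Integrable (fun p => ψ p ^ 2) ((μ.map U₁).prod (μ.map U₂)) := by
    rw [← hprod]
    exact (integrable_map_measure (hψ.pow 2).aestronglyMeasurable
      (hU₁.prodMk hU₂).aemeasurable).mpr hint
  filter_upwards [ae_of_ae_map hU₁.aemeasurable hsq.prod_right_ae] with ω hω
  exact (memLp_two_iff_integrable_sq
    (hψ.comp_measurable measurable_prodMk_left).aestronglyMeasurable).mpr hω

theorem condVar_comap_ae_eq_variance_of_indepFun [IsProbabilityMeasure μ]
    (hU₁ : Measurable U₁) (hU₂ : Measurable U₂) (hindep : IndepFun U₁ U₂ μ)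
    (hψ : StronglyMeasurable ψ) (hint : Integrable (fun ω => ψ (U₁ ω, U₂ ω) ^ 2) μ) :
    Var[fun ω => ψ (U₁ ω, U₂ ω); μ | MeasurableSpace.comap U₁ inferInstance]
      =ᵐ[μ] fun ω => Var[fun y => ψ (U₁ ω, y); μ.map U₂] := by
  have : IsProbabilityMeasure (μ.map U₂) := Measure.isProbabilityMeasure_map hU₂.aemeasurable
  have hX : MemLp (fun ω => ψ (U₁ ω, U₂ ω)) 2 μ := (memLp_two_iff_integrable_sq
    (hψ.comp_measurable (hU₁.prodMk hU₂)).aestronglyMeasurable).mpr hint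
  filter_upwards [condVar_ae_eq_condExp_sq_sub_sq_condExp hU₁.comap_le hX,
    condExp_comap_ae_eq_integral_map_of_indepFun hU₁ hU₂ hindep (hψ.pow 2) hint,
    condExp_comap_ae_eq_integral_map_of_indepFun hU₁ hU₂ hindep hψ (hX.integrable one_le_two),
    ae_memLp_two_comp_prodMk_left_of_indepFun hU₁ hU₂ hindep hψ hint]
    with ω hvar hsq hmean hmem
  rw [hvar, variance_eq_sub hmem, Pi.sub_apply, Pi.pow_apply, hmean]
  exact congrArg (· - _) hsq

end Independent

theorem general_variance_lower_bound_general
    {Ω Λ : Type*} [MeasurableSpace Ω] [MeasurableSpace Λ]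
    (μ : Measure Ω) [IsProbabilityMeasure μ]
    (U₁ U₂ : Ω → Λ) (hU₁ : Measurable U₁) (hU₂ : Measurable U₂)
    (hindep : IndepFun U₁ U₂ μ)
    (A B B' : Set Λ)
    (h : Λ × Λ → ℝ) (hmeas : Measurable h)
    (hint : Integrable (fun ω => (h (U₁ ω, U₂ ω)) ^ 2) μ)
    (Δ : ℝ)
    (hΔ : Δ = sInf {r : ℝ | ∃ x ∈ A, ∃ y ∈ B, ∃ y' ∈ B', r = |h (x, y) - h (x, y')|})
    (hAas : ∀ᵐ ω ∂μ, U₁ ω ∈ A) :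
    ∀ᵐ ω ∂μ,
      (μ[fun ω' => (h (U₁ ω', U₂ ω')
            - (μ[fun ω'' => h (U₁ ω'', U₂ ω'') | MeasurableSpace.comap U₁ inferInstance]) ω') ^ 2
          | MeasurableSpace.comap U₁ inferInstance]) ω
        ≥ Δ ^ 2 / 4 * min (μ (U₂ ⁻¹' B)).toReal (μ (U₂ ⁻¹' B')).toReal := by
  have hnonneg : ∀ r ∈ {r : ℝ | ∃ x ∈ A, ∃ y ∈ B, ∃ y' ∈ B', r = |h (x, y) - h (x, y')|}, 0 ≤ r := by
    rintro - ⟨x, -, y, -, y', -, rfl⟩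
    exact abs_nonneg _
  have hΔ0 : 0 ≤ Δ := hΔ ▸ Real.sInf_nonneg hnonneg
  have hsep : ∀ x ∈ A, ∀ y ∈ B, ∀ y' ∈ B', Δ ≤ |h (x, y) - h (x, y')| :=
    fun x hx y hy y' hy' => hΔ ▸ csInf_le ⟨0, hnonneg⟩ ⟨x, hx, y, hy, y', hy', rfl⟩
  have hlaw : ∀ C, μ.real (U₂ ⁻¹' C) ≤ (μ.map U₂).real C := fun C =>
    ENNReal.toReal_mono (measure_ne_top _ _) (Measure.le_map_apply hU₂.aemeasurable C)
  filter_upwards [condVar_comap_ae_eq_variance_of_indepFun hU₁ hU₂ hindep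
      hmeas.stronglyMeasurable hint,
    ae_memLp_two_comp_prodMk_left_of_indepFun hU₁ hU₂ hindep hmeas.stronglyMeasurable hint,
    hAas] with ω hvar hmem hA
  calc Δ ^ 2 / 4 * min (μ.real (U₂ ⁻¹' B)) (μ.real (U₂ ⁻¹' B'))
      ≤ Δ ^ 2 / 4 * min ((μ.map U₂).real B) ((μ.map U₂).real B') := by
        gcongr <;> apply hlaw
    _ ≤ Var[fun y => h (U₁ ω, y); μ.map U₂] :=
        mul_min_measureReal_le_variance hmem hΔ0 (hsep _ hA)
    _ = _ := hvar.symm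

/-- General variance lower bound: if `U₁, U₂` are independent `Λ`-valued random variables,
`A, B, B̃` are measurable sets, `Δ = inf {|h(x,y) - h(x,ỹ)| : x ∈ A, y ∈ B, ỹ ∈ B̃}`, and
`U₁ ∈ A` almost surely, then a.s. the conditional variance of `h(U₁,U₂)` given `σ(U₁)` is at
least `(Δ²/4) · min(P(U₂ ∈ B), P(U₂ ∈ B̃))`. -/
theorem general_variance_lower_bound
    {Ω Λ : Type*} [MeasurableSpace Ω] [MeasurableSpace Λ]
    (μ : Measure Ω) [IsProbabilityMeasure μ]
    (U₁ U₂ : Ω → Λ) (hU₁ : Measurable U₁) (hU₂ : Measurable U₂)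
    (hindep : IndepFun U₁ U₂ μ)
    (A B B' : Set Λ) (hA : MeasurableSet A) (hB : MeasurableSet B) (hB' : MeasurableSet B')
    (h : Λ × Λ → ℝ) (hmeas : Measurable h) (hnonneg : ∀ z, 0 ≤ h z)
    (hint : Integrable (fun ω => (h (U₁ ω, U₂ ω)) ^ 2) μ)
    (Δ : ℝ)
    (hΔ : Δ = sInf {r : ℝ | ∃ x ∈ A, ∃ y ∈ B, ∃ y' ∈ B', r = |h (x, y) - h (x, y')|})
    (hAas : ∀ᵐ ω ∂μ, U₁ ω ∈ A) :
    ∀ᵐ ω ∂μ,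
      (μ[fun ω' => (h (U₁ ω', U₂ ω')
            - (μ[fun ω'' => h (U₁ ω'', U₂ ω'') | MeasurableSpace.comap U₁ inferInstance]) ω') ^ 2
          | MeasurableSpace.comap U₁ inferInstance]) ω
        ≥ Δ ^ 2 / 4 * min (μ (U₂ ⁻¹' B)).toReal (μ (U₂ ⁻¹' B')).toReal :=
  general_variance_lower_bound_general μ U₁ U₂ hU₁ hU₂ hindep A B B' h hmeas hint Δ hΔ hAas
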